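/- arXiv:0811.2627 — 3 statements merged into one kernel-verified Lean document; each statement's English description precedes it below -/
import Mathlib

section
/- For every 1-cell f: A→B in S, the following are equivalent: (1) f is an equivalence; (2) f is cofaithful and fully faithful; (3) f is faithful and fully cofaithful. -/
/-!
Common framework: relatively exact 2-categories (after Nakaoka,
"Cohomology theory in 2-categories").
-/

open CategoryTheory Bicategory

universe w v u

/-- The tensor unit of a monoidal structure, given explicitly. -/
abbrev munit {H : Type v} [Category.{w} H] (m : MonoidalCategory H) : H :=
  @MonoidalCategoryStruct.tensorUnit H _ m.toMonoidalCategoryStruct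

/-- The tensor product of two objects, for an explicitly given monoidal structure. -/
abbrev mtens {H : Type v} [Category.{w} H] (m : MonoidalCategory H) (x y : H) : H :=
  @MonoidalCategoryStruct.tensorObj H _ m.toMonoidalCategoryStruct x y

section Defs

variable {B : Type u} [Bicategory.{w, v} B]

/-- A 1-cell `f` is faithful if postwhiskering `− ▷ f` is injective on 2-cells. -/
def CFaithful {A C : B} (f : A ⟶ C) : Prop :=
  ∀ ⦃X : B⦄ ⦃g h : X ⟶ A⦄ (η θ : g ⟶ h), η ▷ f = θ ▷ f → η = θ

/-- A 1-cell `f` is fully faithful if `− ∘ f` is a fully faithful functor on hom-categories. -/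
def CFullyFaithful {A C : B} (f : A ⟶ C) : Prop :=
  CFaithful f ∧ ∀ ⦃X : B⦄ (g h : X ⟶ A) (μ : g ≫ f ⟶ h ≫ f), ∃ η : g ⟶ h, η ▷ f = μ

/-- A 1-cell `f` is cofaithful if prewhiskering `f ◁ −` is injective on 2-cells. -/
def CCofaithful {A C : B} (f : A ⟶ C) : Prop :=
  ∀ ⦃X : B⦄ ⦃g h : C ⟶ X⦄ (η θ : g ⟶ h), f ◁ η = f ◁ θ → η = θ

/-- A 1-cell `f` is fully cofaithful if `f ∘ −` is a fully faithful functor on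
hom-categories. -/
def CFullyCofaithful {A C : B} (f : A ⟶ C) : Prop :=
  CCofaithful f ∧ ∀ ⦃X : B⦄ (g h : C ⟶ X) (μ : f ≫ g ⟶ f ≫ h), ∃ η : g ⟶ h, f ◁ η = μ

/-- A 1-cell is an equivalence if it has a quasi-inverse up to invertible 2-cells. -/
def Is2Equiv {A C : B} (f : A ⟶ C) : Prop :=
  ∃ g : C ⟶ A, Nonempty (f ≫ g ≅ 𝟙 A) ∧ Nonempty (g ≫ f ≅ 𝟙 C)

/-- 2-universal product of two 0-cells. -/
def IsProduct2 (A₁ A₂ P : B) (p₁ : P ⟶ A₁) (p₂ : P ⟶ A₂) : Prop :=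
  (∀ (X : B) (q₁ : X ⟶ A₁) (q₂ : X ⟶ A₂),
    ∃ (q : X ⟶ P) (_ : q ≫ p₁ ⟶ q₁) (_ : q ≫ p₂ ⟶ q₂), True)
  ∧ (∀ (X : B) (q₁ : X ⟶ A₁) (q₂ : X ⟶ A₂) (r r' : X ⟶ P)
      (ξ₁ : r ≫ p₁ ⟶ q₁) (ξ₂ : r ≫ p₂ ⟶ q₂) (ξ₁' : r' ≫ p₁ ⟶ q₁) (ξ₂' : r' ≫ p₂ ⟶ q₂),
      ∃! η : r ⟶ r', ((η ▷ p₁) ≫ ξ₁' = ξ₁) ∧ ((η ▷ p₂) ≫ ξ₂' = ξ₂))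

/-- 2-universal coproduct of two 0-cells. -/
def IsCoproduct2 (A₁ A₂ P : B) (i₁ : A₁ ⟶ P) (i₂ : A₂ ⟶ P) : Prop :=
  (∀ (X : B) (q₁ : A₁ ⟶ X) (q₂ : A₂ ⟶ X),
    ∃ (q : P ⟶ X) (_ : i₁ ≫ q ⟶ q₁) (_ : i₂ ≫ q ⟶ q₂), True)
  ∧ (∀ (X : B) (q₁ : A₁ ⟶ X) (q₂ : A₂ ⟶ X) (r r' : P ⟶ X)
      (ξ₁ : i₁ ≫ r ⟶ q₁) (ξ₂ : i₂ ≫ r ⟶ q₂) (ξ₁' : i₁ ≫ r' ⟶ q₁) (ξ₂' : i₂ ≫ r' ⟶ q₂),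
      ∃! η : r ⟶ r', ((i₁ ◁ η) ≫ ξ₁' = ξ₁) ∧ ((i₂ ◁ η) ≫ ξ₂' = ξ₂))

/-- 2-universal difference kernel of a parallel pair of 1-cells. -/
def IsDiffKernel {A C : B} (g h : A ⟶ C) (D : B) (d : D ⟶ A) (φ : d ≫ g ⟶ d ≫ h) : Prop :=
  (∀ (X : B) (e : X ⟶ A) (ψ : e ≫ g ⟶ e ≫ h),
    ∃ (e' : X ⟶ D) (ε' : e' ≫ d ⟶ e),
      (α_ e' d g).hom ≫ (e' ◁ φ) ≫ (α_ e' d h).inv ≫ (ε' ▷ h) = (ε' ▷ g) ≫ ψ)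
  ∧ (∀ (X : B) (e : X ⟶ A) (ψ : e ≫ g ⟶ e ≫ h)
      (e₁ e₂ : X ⟶ D) (ε₁ : e₁ ≫ d ⟶ e) (ε₂ : e₂ ≫ d ⟶ e),
      ((α_ e₁ d g).hom ≫ (e₁ ◁ φ) ≫ (α_ e₁ d h).inv ≫ (ε₁ ▷ h) = (ε₁ ▷ g) ≫ ψ) →
      ((α_ e₂ d g).hom ≫ (e₂ ◁ φ) ≫ (α_ e₂ d h).inv ≫ (ε₂ ▷ h) = (ε₂ ▷ g) ≫ ψ) →
      ∃! η : e₁ ⟶ e₂, (η ▷ d) ≫ ε₂ = ε₁)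

/-- 2-universal pullback of a cospan of 1-cells. -/
def IsPullback2 {A₁ A₂ C : B} (f₁ : A₁ ⟶ C) (f₂ : A₂ ⟶ C) (P : B)
    (p₁ : P ⟶ A₂) (p₂ : P ⟶ A₁) (ξ : p₁ ≫ f₂ ⟶ p₂ ≫ f₁) : Prop :=
  (∀ (X : B) (g₁ : X ⟶ A₂) (g₂ : X ⟶ A₁) (η : g₁ ≫ f₂ ⟶ g₂ ≫ f₁),
    ∃ (g : X ⟶ P) (ξ₁ : g ≫ p₁ ⟶ g₁) (ξ₂ : g ≫ p₂ ⟶ g₂),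
      (ξ₁ ▷ f₂) ≫ η = (α_ g p₁ f₂).hom ≫ (g ◁ ξ) ≫ (α_ g p₂ f₁).inv ≫ (ξ₂ ▷ f₁))
  ∧ (∀ (X : B) (g₁ : X ⟶ A₂) (g₂ : X ⟶ A₁) (η : g₁ ≫ f₂ ⟶ g₂ ≫ f₁)
      (g g' : X ⟶ P) (ξ₁ : g ≫ p₁ ⟶ g₁) (ξ₂ : g ≫ p₂ ⟶ g₂)
      (ξ₁' : g' ≫ p₁ ⟶ g₁) (ξ₂' : g' ≫ p₂ ⟶ g₂),
      ((ξ₁ ▷ f₂) ≫ η = (α_ g p₁ f₂).hom ≫ (g ◁ ξ) ≫ (α_ g p₂ f₁).inv ≫ (ξ₂ ▷ f₁)) →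
      ((ξ₁' ▷ f₂) ≫ η = (α_ g' p₁ f₂).hom ≫ (g' ◁ ξ) ≫ (α_ g' p₂ f₁).inv ≫ (ξ₂' ▷ f₁)) →
      ∃! ζ : g ⟶ g', ((ζ ▷ p₁) ≫ ξ₁' = ξ₁) ∧ ((ζ ▷ p₂) ≫ ξ₂' = ξ₂))

end Defs

/-- A locally SCG 2-category: each hom-category is a symmetric categorical group,
`Hom` is a 2-functor into SCG (expressed through the zero 1-cells, the unit
constraints `sharp`/`flat` of the monoidal functors `f ∘ −`, `− ∘ f` and their
coherence), there is a zero object, and binary (co)products exist. -/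
structure LocSCG (B : Type u) [Bicategory.{w, v} B] where
  /-- symmetric monoidal structure on each hom-category -/
  monStr : ∀ A C : B, MonoidalCategory (A ⟶ C)
  symm : ∀ A C : B, @SymmetricCategory (A ⟶ C) _ (monStr A C)
  /-- every 2-cell is invertible -/
  cellIso : ∀ {A C : B} {f g : A ⟶ C} (η : f ⟶ g), IsIso η
  /-- every 1-cell is ⊗-invertible up to an isomorphism -/
  objInv : ∀ {A C : B} (f : A ⟶ C),
    ∃ g : A ⟶ C, Nonempty (mtens (monStr A C) f g ≅ munit (monStr A C))
  /-- zero 1-cells compose to zero 1-cells -/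
  zero_comp : ∀ A C E : B, munit (monStr A C) ≫ munit (monStr C E) = munit (monStr A E)
  /-- unit constraint `f_I^♯ : f ∘ 0 ⟶ 0` of the monoidal functor `f ∘ −` -/
  sharp : ∀ {A C E : B} (f : A ⟶ C), f ≫ munit (monStr C E) ≅ munit (monStr A E)
  /-- unit constraint `f_I^♭ : 0 ∘ f ⟶ 0` of the monoidal functor `− ∘ f` -/
  flat : ∀ {A C E : B} (f : C ⟶ E), munit (monStr A C) ≫ f ≅ munit (monStr A E)
  sharp_natural : ∀ {A C E : B} {f g : A ⟶ C} (η : f ⟶ g),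
    (η ▷ munit (monStr C E)) ≫ (sharp g).hom = (sharp f).hom
  flat_natural : ∀ {A C E : B} {f g : C ⟶ E} (η : f ⟶ g),
    (munit (monStr A C) ◁ η) ≫ (flat g).hom = (flat f).hom
  /-- unit constraints of zero 1-cells are identities -/
  sharp_zero : ∀ A C E : B,
    (sharp (E := E) (munit (monStr A C))).hom = eqToHom (zero_comp A C E)
  flat_zero : ∀ A C E : B,
    (flat (A := A) (munit (monStr C E))).hom = eqToHom (zero_comp A C E)
  sharp_comp : ∀ {A C E G : B} (f : A ⟶ C) (g : C ⟶ E),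
    (sharp (E := G) (f ≫ g)).hom
      = (α_ f g (munit (monStr E G))).hom ≫ (f ◁ (sharp g).hom) ≫ (sharp f).hom
  flat_comp : ∀ {X A C E : B} (f : A ⟶ C) (g : C ⟶ E),
    (flat (A := X) (f ≫ g)).hom
      = (α_ (munit (monStr X A)) f g).inv ≫ ((flat f).hom ▷ g) ≫ (flat g).hom
  sharp_flat : ∀ {A C E G : B} (f : A ⟶ C) (g : E ⟶ G),
    ((sharp f).hom ▷ g) ≫ (flat g).hom
      = (α_ f (munit (monStr C E)) g).hom ≫ (f ◁ (flat g).hom) ≫ (sharp f).hom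
  /-- tensor constraint of the monoidal functor `k ∘ −` -/
  sharpTensor : ∀ {X A C : B} (k : X ⟶ A) (g h : A ⟶ C),
    k ≫ mtens (monStr A C) g h ≅ mtens (monStr X C) (k ≫ g) (k ≫ h)
  /-- tensor constraint of the monoidal functor `− ∘ k` -/
  flatTensor : ∀ {A C E : B} (k : C ⟶ E) (g h : A ⟶ C),
    mtens (monStr A C) g h ≫ k ≅ mtens (monStr A E) (g ≫ k) (h ≫ k)
  /-- the zero object -/
  zObj : B
  homZZ : ∀ f : zObj ⟶ zObj, f = munit (monStr zObj zObj)
  cellZZ : ∀ (f g : zObj ⟶ zObj) (η θ : f ⟶ g), η = θ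
  toZero : ∀ {A : B} (f : A ⟶ zObj), f ⟶ munit (monStr A zObj)
  toZero_unique : ∀ {A : B} (f : A ⟶ zObj) (η θ : f ⟶ munit (monStr A zObj)), η = θ
  fromZero : ∀ {A : B} (f : zObj ⟶ A), f ⟶ munit (monStr zObj A)
  fromZero_unique : ∀ {A : B} (f : zObj ⟶ A) (η θ : f ⟶ munit (monStr zObj A)), η = θ
  hasProd : ∀ A₁ A₂ : B, ∃ (P : B) (p₁ : P ⟶ A₁) (p₂ : P ⟶ A₂), IsProduct2 A₁ A₂ P p₁ p₂
  hasCoprod : ∀ A₁ A₂ : B, ∃ (P : B) (i₁ : A₁ ⟶ P) (i₂ : A₂ ⟶ P), IsCoproduct2 A₁ A₂ P i₁ i₂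

namespace LocSCG

variable {B : Type u} [Bicategory.{w, v} B]

/-- the zero 1-cell `0_{A,C}`. -/
def zro (S : LocSCG B) (A C : B) : A ⟶ C := munit (S.monStr A C)

/-- tensor product of parallel 1-cells in a hom-category. -/
def tens (S : LocSCG B) {A C : B} (f g : A ⟶ C) : A ⟶ C := mtens (S.monStr A C) f g

/-- tensor product of 2-cells in a hom-category. -/
def tensHom (S : LocSCG B) {A C : B} {f₁ g₁ f₂ g₂ : A ⟶ C} (η : f₁ ⟶ g₁) (θ : f₂ ⟶ g₂) :
    S.tens f₁ f₂ ⟶ S.tens g₁ g₂ :=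
  @MonoidalCategoryStruct.tensorHom _ _ (S.monStr A C).toMonoidalCategoryStruct _ _ _ _ η θ

/-- associator of the hom-category monoidal structure. -/
def tassoc (S : LocSCG B) {A C : B} (f g h : A ⟶ C) :
    S.tens (S.tens f g) h ≅ S.tens f (S.tens g h) :=
  @MonoidalCategoryStruct.associator _ _ (S.monStr A C).toMonoidalCategoryStruct f g h

/-- left unitor of the hom-category monoidal structure. -/
def tlunit (S : LocSCG B) {A C : B} (f : A ⟶ C) : S.tens (S.zro A C) f ≅ f :=
  @MonoidalCategoryStruct.leftUnitor _ _ (S.monStr A C).toMonoidalCategoryStruct f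

/-- right unitor of the hom-category monoidal structure. -/
def trunit (S : LocSCG B) {A C : B} (f : A ⟶ C) : S.tens f (S.zro A C) ≅ f :=
  @MonoidalCategoryStruct.rightUnitor _ _ (S.monStr A C).toMonoidalCategoryStruct f

/-- inverse of a 2-cell. -/
noncomputable def inv2 (S : LocSCG B) {A C : B} {f g : A ⟶ C} (η : f ⟶ g) : g ⟶ f :=
  @CategoryTheory.inv _ _ _ _ η (S.cellIso η)

variable (S : LocSCG B)

/-- `(K, k, ε)` is a (2-universal) kernel of `f`. -/
def IsKernel {A C : B} (f : A ⟶ C) (K : B) (k : K ⟶ A) (ε₀ : k ≫ f ⟶ S.zro K C) : Prop :=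
  (∀ (X : B) (x : X ⟶ A) (e : x ≫ f ⟶ S.zro X C),
    ∃ (x' : X ⟶ K) (e' : x' ≫ k ⟶ x),
      (e' ▷ f) ≫ e = (α_ x' k f).hom ≫ (x' ◁ ε₀) ≫ (S.sharp x').hom)
  ∧ (∀ (X : B) (x : X ⟶ A) (e : x ≫ f ⟶ S.zro X C)
      (x₁ x₂ : X ⟶ K) (e₁ : x₁ ≫ k ⟶ x) (e₂ : x₂ ≫ k ⟶ x),
      ((e₁ ▷ f) ≫ e = (α_ x₁ k f).hom ≫ (x₁ ◁ ε₀) ≫ (S.sharp x₁).hom) →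
      ((e₂ ▷ f) ≫ e = (α_ x₂ k f).hom ≫ (x₂ ◁ ε₀) ≫ (S.sharp x₂).hom) →
      ∃! η : x₁ ⟶ x₂, (η ▷ k) ≫ e₂ = e₁)

/-- `(Q, c, π)` is a (2-universal) cokernel of `f`. -/
def IsCokernel {A C : B} (f : A ⟶ C) (Q : B) (c : C ⟶ Q) (π : f ≫ c ⟶ S.zro A Q) : Prop :=
  (∀ (X : B) (x : C ⟶ X) (e : f ≫ x ⟶ S.zro A X),
    ∃ (x' : Q ⟶ X) (e' : c ≫ x' ⟶ x),
      (f ◁ e') ≫ e = (α_ f c x').inv ≫ (π ▷ x') ≫ (S.flat x').hom)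
  ∧ (∀ (X : B) (x : C ⟶ X) (e : f ≫ x ⟶ S.zro A X)
      (x₁ x₂ : Q ⟶ X) (e₁ : c ≫ x₁ ⟶ x) (e₂ : c ≫ x₂ ⟶ x),
      ((f ◁ e₁) ≫ e = (α_ f c x₁).inv ≫ (π ▷ x₁) ≫ (S.flat x₁).hom) →
      ((f ◁ e₂) ≫ e = (α_ f c x₂).inv ≫ (π ▷ x₂) ≫ (S.flat x₂).hom) →
      ∃! η : x₁ ⟶ x₂, (c ◁ η) ≫ e₂ = e₁)

/-- compatibility of a candidate `(x, e)` with `φ` (relative kernel condition). -/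
def RelKerCompat {X A C E : B} (f : A ⟶ C) (g : C ⟶ E) (φ : f ≫ g ⟶ S.zro A E)
    (x : X ⟶ A) (e : x ≫ f ⟶ S.zro X C) : Prop :=
  (α_ x f g).hom ≫ (x ◁ φ) ≫ (S.sharp x).hom = (e ▷ g) ≫ (S.flat g).hom

/-- `(K, k, ε)` is a (2-universal) relative kernel `Ker(f, φ)` of `f : A ⟶ C`
relative to `g : C ⟶ E`, `φ : f ∘ g ⟶ 0`. -/
def IsRelKernel {A C E : B} (f : A ⟶ C) (g : C ⟶ E) (φ : f ≫ g ⟶ S.zro A E)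
    (K : B) (k : K ⟶ A) (ε₀ : k ≫ f ⟶ S.zro K C) : Prop :=
  S.RelKerCompat f g φ k ε₀
  ∧ (∀ (X : B) (x : X ⟶ A) (e : x ≫ f ⟶ S.zro X C), S.RelKerCompat f g φ x e →
      ∃ (x' : X ⟶ K) (e' : x' ≫ k ⟶ x),
        (e' ▷ f) ≫ e = (α_ x' k f).hom ≫ (x' ◁ ε₀) ≫ (S.sharp x').hom)
  ∧ (∀ (X : B) (x : X ⟶ A) (e : x ≫ f ⟶ S.zro X C), S.RelKerCompat f g φ x e →
      ∀ (x₁ x₂ : X ⟶ K) (e₁ : x₁ ≫ k ⟶ x) (e₂ : x₂ ≫ k ⟶ x),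
        ((e₁ ▷ f) ≫ e = (α_ x₁ k f).hom ≫ (x₁ ◁ ε₀) ≫ (S.sharp x₁).hom) →
        ((e₂ ▷ f) ≫ e = (α_ x₂ k f).hom ≫ (x₂ ◁ ε₀) ≫ (S.sharp x₂).hom) →
        ∃! η : x₁ ⟶ x₂, (η ▷ k) ≫ e₂ = e₁)

/-- compatibility of a candidate `(x, e)` with `φ` (relative cokernel condition). -/
def RelCokCompat {A C E X : B} (f : A ⟶ C) (g : C ⟶ E) (φ : f ≫ g ⟶ S.zro A E)
    (x : E ⟶ X) (e : g ≫ x ⟶ S.zro C X) : Prop :=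
  (φ ▷ x) ≫ (S.flat x).hom = (α_ f g x).hom ≫ (f ◁ e) ≫ (S.sharp f).hom

/-- `(Q, c, π)` is a (2-universal) relative cokernel `Cok(g, φ)` of `g : C ⟶ E`
relative to `f : A ⟶ C`, `φ : f ∘ g ⟶ 0`. -/
def IsRelCokernel {A C E : B} (f : A ⟶ C) (g : C ⟶ E) (φ : f ≫ g ⟶ S.zro A E)
    (Q : B) (c : E ⟶ Q) (π : g ≫ c ⟶ S.zro C Q) : Prop :=
  S.RelCokCompat f g φ c π
  ∧ (∀ (X : B) (x : E ⟶ X) (e : g ≫ x ⟶ S.zro C X), S.RelCokCompat f g φ x e →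
      ∃ (x' : Q ⟶ X) (e' : c ≫ x' ⟶ x),
        (g ◁ e') ≫ e = (α_ g c x').inv ≫ (π ▷ x') ≫ (S.flat x').hom)
  ∧ (∀ (X : B) (x : E ⟶ X) (e : g ≫ x ⟶ S.zro C X), S.RelCokCompat f g φ x e →
      ∀ (x₁ x₂ : Q ⟶ X) (e₁ : c ≫ x₁ ⟶ x) (e₂ : c ≫ x₂ ⟶ x),
        ((g ◁ e₁) ≫ e = (α_ g c x₁).inv ≫ (π ▷ x₁) ≫ (S.flat x₁).hom) →
        ((g ◁ e₂) ≫ e = (α_ g c x₂).inv ≫ (π ▷ x₂) ≫ (S.flat x₂).hom) →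
        ∃! η : x₁ ⟶ x₂, (c ◁ η) ≫ e₂ = e₁)

/-- a 0-cell is zero if it is equivalent to the zero object. -/
def ZeroEq (X : B) : Prop := ∃ e : X ⟶ S.zObj, Is2Equiv e

/-- 2-exactness of `(f, g, φ)` in the middle 0-cell: the cokernel of the induced
factorization of `f` through any kernel of `g` is zero. -/
def TwoExact {A C E : B} (f : A ⟶ C) (g : C ⟶ E) (φ : f ≫ g ⟶ S.zro A E) : Prop :=
  ∀ (K : B) (k : K ⟶ C) (ε₀ : k ≫ g ⟶ S.zro K E), S.IsKernel g K k ε₀ →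
  ∀ (fb : A ⟶ K) (φb : fb ≫ k ⟶ f),
    ((φb ▷ g) ≫ φ = (α_ fb k g).hom ≫ (fb ◁ ε₀) ≫ (S.sharp fb).hom) →
    S.IsCokernel fb S.zObj (S.zro K S.zObj) (S.sharp fb).hom

/-- relative 2-exactness at the middle 0-cell `A₂` of a 5-term window
`A₀ → A₁ → A₂ → A₃ → A₄` of a complex: the relative cohomology
`H = Cok(k, ν₂)` is equivalent to the zero object. -/
def RelTwoExactWindow {A₀ A₁ A₂ A₃ A₄ : B}
    (d₀ : A₀ ⟶ A₁) (d₁ : A₁ ⟶ A₂) (d₂ : A₂ ⟶ A₃) (d₃ : A₃ ⟶ A₄)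
    (δ₁ : d₀ ≫ d₁ ⟶ S.zro A₀ A₂) (δ₂ : d₁ ≫ d₂ ⟶ S.zro A₁ A₃)
    (δ₃ : d₂ ≫ d₃ ⟶ S.zro A₂ A₄) : Prop :=
  ∀ (Z : B) (z : Z ⟶ A₂) (ζ : z ≫ d₂ ⟶ S.zro Z A₃),
    S.IsRelKernel d₂ d₃ δ₃ Z z ζ →
  ∀ (k : A₁ ⟶ Z) (ν₁ : k ≫ z ⟶ d₁) (ν₂ : d₀ ≫ k ⟶ S.zro A₀ Z),
    ((ν₁ ▷ d₂) ≫ δ₂ = (α_ k z d₂).hom ≫ (k ◁ ζ) ≫ (S.sharp k).hom) →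
    ((α_ d₀ k z).hom ≫ (d₀ ◁ ν₁) ≫ δ₁ = (ν₂ ▷ z) ≫ (S.flat z).hom) →
  ∀ (H : B) (c : Z ⟶ H) (π : k ≫ c ⟶ S.zro A₁ H),
    S.IsRelCokernel d₀ k ν₂ H c π → S.ZeroEq H

end LocSCG

/-- The remaining axioms of a relatively exact 2-category: existence of kernels and
cokernels, and the characterization of (co)faithful 1-cells. -/
structure IsRelExact {B : Type u} [Bicategory.{w, v} B] (S : LocSCG B) : Prop where
  hasKer : ∀ {A C : B} (f : A ⟶ C),
    ∃ (K : B) (k : K ⟶ A) (ε₀ : k ≫ f ⟶ S.zro K C), S.IsKernel f K k ε₀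
  hasCok : ∀ {A C : B} (f : A ⟶ C),
    ∃ (Q : B) (c : C ⟶ Q) (π : f ≫ c ⟶ S.zro A Q), S.IsCokernel f Q c π
  faithful_iff : ∀ {A C : B} (f : A ⟶ C) (Q : B) (c : C ⟶ Q) (π : f ≫ c ⟶ S.zro A Q),
    S.IsCokernel f Q c π → (CFaithful f ↔ S.IsKernel c A f π)
  cofaithful_iff : ∀ {A C : B} (f : A ⟶ C) (K : B) (k : K ⟶ A) (ε₀ : k ≫ f ⟶ S.zro K C),
    S.IsKernel f K k ε₀ → (CCofaithful f ↔ S.IsCokernel k C f ε₀)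

/-- A (cochain) complex in a locally SCG 2-category. -/
structure Cpx {B : Type u} [Bicategory.{w, v} B] (S : LocSCG B) where
  X : ℤ → B
  d : ∀ n : ℤ, X n ⟶ X (n + 1)
  δ : ∀ n : ℤ, d n ≫ d (n + 1) ⟶ S.zro (X n) (X (n + 1 + 1))
  compat : ∀ n : ℤ,
    (α_ (d n) (d (n + 1)) (d (n + 1 + 1))).hom ≫ (d n ◁ δ (n + 1)) ≫ (S.sharp (d n)).hom
      = (δ n ▷ d (n + 1 + 1)) ≫ (S.flat (d (n + 1 + 1))).hom

/-- A morphism of complexes. -/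
structure CpxMor {B : Type u} [Bicategory.{w, v} B] (S : LocSCG B) (A₁ A₂ : Cpx S) where
  f : ∀ n : ℤ, A₁.X n ⟶ A₂.X n
  lam : ∀ n : ℤ, A₁.d n ≫ f (n + 1) ⟶ f n ≫ A₂.d n
  compat : ∀ n : ℤ,
    (A₁.δ n ▷ f (n + 1 + 1)) ≫ (S.flat (f (n + 1 + 1))).hom
      = (α_ (A₁.d n) (A₁.d (n + 1)) (f (n + 1 + 1))).hom ≫ (A₁.d n ◁ lam (n + 1))
          ≫ (α_ (A₁.d n) (f (n + 1)) (A₂.d (n + 1))).inv ≫ (lam n ▷ A₂.d (n + 1))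
          ≫ (α_ (f n) (A₂.d n) (A₂.d (n + 1))).hom ≫ (f n ◁ A₂.δ n) ≫ (S.sharp (f n)).hom

/-- An extension of complexes: degreewise an extension, with compatible 2-cells. -/
def IsCpxExtension {B : Type u} [Bicategory.{w, v} B] (S : LocSCG B) {A₁ A₂ A₃ : Cpx S}
    (F : CpxMor S A₁ A₂) (G : CpxMor S A₂ A₃)
    (φ : ∀ n : ℤ, F.f n ≫ G.f n ⟶ S.zro (A₁.X n) (A₃.X n)) : Prop :=
  (∀ n : ℤ, S.IsKernel (G.f n) (A₁.X n) (F.f n) (φ n)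
      ∧ S.IsCokernel (F.f n) (A₃.X n) (G.f n) (φ n))
  ∧ (∀ n : ℤ,
      (F.lam n ▷ G.f (n + 1)) ≫ (α_ (F.f n) (A₂.d n) (G.f (n + 1))).hom
          ≫ (F.f n ◁ G.lam n) ≫ (α_ (F.f n) (G.f n) (A₃.d n)).inv
          ≫ (φ n ▷ A₃.d n) ≫ (S.flat (A₃.d n)).hom
        = (α_ (A₁.d n) (F.f (n + 1)) (G.f (n + 1))).hom ≫ (A₁.d n ◁ φ (n + 1))
            ≫ (S.sharp (A₁.d n)).hom)

/-- A witness for the (relative) cohomology `H = Cok(k, ν₂)` of a complex at the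
0-cell `X (m + 2)`. -/
structure HWitness {B : Type u} [Bicategory.{w, v} B] (S : LocSCG B) (A : Cpx S) (m : ℤ) where
  Z : B
  z : Z ⟶ A.X (m + 1 + 1)
  ζ : z ≫ A.d (m + 1 + 1) ⟶ S.zro Z (A.X (m + 1 + 1 + 1))
  isZ : S.IsRelKernel (A.d (m + 1 + 1)) (A.d (m + 1 + 1 + 1)) (A.δ (m + 1 + 1)) Z z ζ
  k : A.X (m + 1) ⟶ Z
  ν₁ : k ≫ z ⟶ A.d (m + 1)
  ν₂ : A.d m ≫ k ⟶ S.zro (A.X m) Z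
  hν₁ : (ν₁ ▷ A.d (m + 1 + 1)) ≫ A.δ (m + 1)
      = (α_ k z (A.d (m + 1 + 1))).hom ≫ (k ◁ ζ) ≫ (S.sharp k).hom
  hν₂ : (α_ (A.d m) k z).hom ≫ (A.d m ◁ ν₁) ≫ A.δ m = (ν₂ ▷ z) ≫ (S.flat z).hom
  H : B
  c : Z ⟶ H
  π : k ≫ c ⟶ S.zro (A.X (m + 1)) H
  isH : S.IsRelCokernel (A.d m) k ν₂ H c π

/-!
An equivalence induces equivalences of hom-categories by pre- and postcomposition, so it is
(co)faithful and fully (co)faithful.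

Conversely, let `f : A ⟶ C` be cofaithful and fully faithful, with kernel `(K, k, ε)`.
Cofaithfulness makes `f` a cokernel of `k`, and fullness of `− ≫ f` lifts
`ε : k ≫ f ⟶ 0 ≅ 0 ≫ f` to `θ : k ⟶ 0`, so `f` is a cokernel of a 1-cell that is zero
compatibly with `ε`. Then `𝟙 A` factors through `f`, giving `g` with `f ≫ g ≅ 𝟙 A`; and `f`
factors through itself both via `𝟙 C` and via `g ≫ f`, so uniqueness of factorizations gives
`𝟙 C ≅ g ≫ f`. The faithful and fully cofaithful case is dual, using the cokernel of `f`.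
-/

namespace CategoryTheory.Bicategory

variable {B : Type u} [Bicategory.{w, v} B] {a b : B} {f : a ⟶ b} {g : b ⟶ a}

theorem isEquivalence_postcomp (x : B) (i₁ : f ≫ g ≅ 𝟙 a) (i₂ : g ≫ f ≅ 𝟙 b) :
    (postcomp x f).IsEquivalence :=
  (CategoryTheory.Equivalence.mk (postcomp x f) (postcomp x g)
    (associatorNatIsoLeft x f g ≪≫ (postcomposing x a a).mapIso i₁ ≪≫ rightUnitorNatIso x a).symm
    (associatorNatIsoLeft x g f ≪≫ (postcomposing x b b).mapIso i₂ ≪≫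
      rightUnitorNatIso x b)).isEquivalence_functor

theorem isEquivalence_precomp (x : B) (i₁ : f ≫ g ≅ 𝟙 a) (i₂ : g ≫ f ≅ 𝟙 b) :
    (precomp x f).IsEquivalence :=
  (CategoryTheory.Equivalence.mk (precomp x f) (precomp x g)
    ((leftUnitorNatIso b x).symm ≪≫ (precomposing b b x).mapIso i₂.symm ≪≫
      associatorNatIsoRight g f x)
    ((associatorNatIsoRight f g x).symm ≪≫ (precomposing a a x).mapIso i₁ ≪≫
      leftUnitorNatIso a x)).isEquivalence_functor

end CategoryTheory.Bicategory

section

variable {B : Type u} [Bicategory.{w, v} B] {A C : B} {f : A ⟶ C}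

theorem Is2Equiv.cFullyFaithful (hf : Is2Equiv f) : CFullyFaithful f := by
  obtain ⟨g, ⟨i₁⟩, ⟨i₂⟩⟩ := hf
  refine ⟨fun X _ _ _ _ h => ?_, fun X _ _ μ => ?_⟩ <;> have := isEquivalence_postcomp X i₁ i₂
  exacts [(postcomp X f).map_injective h, (postcomp X f).map_surjective μ]

theorem Is2Equiv.cFullyCofaithful (hf : Is2Equiv f) : CFullyCofaithful f := by
  obtain ⟨g, ⟨i₁⟩, ⟨i₂⟩⟩ := hf
  refine ⟨fun X _ _ _ _ h => ?_, fun X _ _ μ => ?_⟩ <;> have := isEquivalence_precomp X i₁ i₂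
  exacts [(precomp X f).map_injective h, (precomp X f).map_surjective μ]

end

namespace LocSCG

variable {B : Type u} [Bicategory.{w, v} B] (S : LocSCG B)

/-- `flat_comp` at `𝟙 C ≫ 𝟙 C` makes `(ρ_ 0).inv ≫ flat (𝟙 C)` an invertible idempotent. -/
theorem flat_id (A C : B) : (S.flat (A := A) (𝟙 C)).hom = (ρ_ (S.zro A C)).hom := by
  have hcomp := S.flat_comp (X := A) (𝟙 C) (𝟙 C)
  rw [← S.flat_natural (λ_ (𝟙 C)).hom, unitors_equal, whiskerLeft_rightUnitor,
    whiskerRight_id, Category.assoc, cancel_epi, Category.assoc, Category.assoc, cancel_epi]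
    at hcomp
  have hinv : (ρ_ _).inv ≫ (S.flat (A := A) (𝟙 C)).hom = 𝟙 _ := by
    rw [← cancel_epi (S.flat (𝟙 C)).hom, ← hcomp, Category.comp_id]
  exact ((Iso.inv_comp_eq _).1 hinv).trans (Category.comp_id _)

theorem sharp_id (A X : B) : (S.sharp (E := X) (𝟙 A)).hom = (λ_ (S.zro A X)).hom := by
  have hcomp := S.sharp_comp (G := X) (𝟙 A) (𝟙 A)
  rw [← S.sharp_natural (λ_ (𝟙 A)).hom, leftUnitor_whiskerRight, id_whiskerLeft,
    Category.assoc, cancel_epi, Category.assoc, Category.assoc, cancel_epi] at hcomp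
  have hinv : (λ_ _).inv ≫ (S.sharp (E := X) (𝟙 A)).hom = 𝟙 _ := by
    rw [← cancel_epi (S.sharp (𝟙 A)).hom, ← hcomp, Category.comp_id]
  exact ((Iso.inv_comp_eq _).1 hinv).trans (Category.comp_id _)

theorem is2Equiv_of_isCokernel {K A C : B} {k : K ⟶ A} {f : A ⟶ C} {ε₀ : k ≫ f ⟶ S.zro K C}
    (hcok : S.IsCokernel k C f ε₀) (θ : k ⟶ S.zro K A)
    (hθ : (θ ▷ f) ≫ (S.flat f).hom = ε₀) : Is2Equiv f := by
  obtain ⟨g, e, he⟩ := hcok.1 A (𝟙 A) ((ρ_ k).hom ≫ θ)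
  have hid : (k ◁ (ρ_ f).hom) ≫ ε₀ = (α_ k f (𝟙 C)).inv ≫ (ε₀ ▷ 𝟙 C) ≫ (S.flat (𝟙 C)).hom := by
    rw [flat_id, whiskerRight_id]
    bicategory
  have hgf : (k ◁ ((α_ f g f).inv ≫ (e ▷ f) ≫ (λ_ f).hom)) ≫ ε₀
      = (α_ k f (g ≫ f)).inv ≫ (ε₀ ▷ (g ≫ f)) ≫ (S.flat (g ≫ f)).hom := by
    calc _ = (k ◁ (α_ f g f).inv) ≫ (α_ k (f ≫ g) f).inv ≫ (((k ◁ e) ≫ (ρ_ k).hom ≫ θ) ▷ f)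
          ≫ (S.flat f).hom := by
          rw [← hθ, comp_whiskerRight, comp_whiskerRight]
          bicategory
      _ = _ := by
          rw [he, S.flat_comp]
          bicategory
  obtain ⟨η, -, -⟩ := hcok.2 C f ε₀ (𝟙 C) (g ≫ f) _ _ hid hgf
  have := S.cellIso e
  have := S.cellIso η
  exact ⟨g, ⟨asIso e⟩, ⟨(asIso η).symm⟩⟩

theorem is2Equiv_of_isKernel {A C Q : B} {f : A ⟶ C} {c : C ⟶ Q} {π : f ≫ c ⟶ S.zro A Q}
    (hker : S.IsKernel c A f π) (θ : c ⟶ S.zro C Q)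
    (hθ : (f ◁ θ) ≫ (S.sharp f).hom = π) : Is2Equiv f := by
  obtain ⟨g, e, he⟩ := hker.1 C (𝟙 C) ((λ_ c).hom ≫ θ)
  have hid : ((λ_ f).hom ▷ c) ≫ π = (α_ (𝟙 A) f c).hom ≫ (𝟙 A ◁ π) ≫ (S.sharp (𝟙 A)).hom := by
    rw [sharp_id, id_whiskerLeft]
    bicategory
  have hfg : (((α_ f g f).hom ≫ (f ◁ e) ≫ (ρ_ f).hom) ▷ c) ≫ π
      = (α_ (f ≫ g) f c).hom ≫ ((f ≫ g) ◁ π) ≫ (S.sharp (f ≫ g)).hom := by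
    calc _ = (α_ f g f).hom ▷ c ≫ (α_ f (g ≫ f) c).hom ≫ (f ◁ ((e ▷ c) ≫ (λ_ c).hom ≫ θ))
          ≫ (S.sharp f).hom := by
          rw [← hθ, whiskerLeft_comp, whiskerLeft_comp]
          bicategory
      _ = _ := by
          rw [he, S.sharp_comp]
          bicategory
  obtain ⟨η, -, -⟩ := hker.2 A f π (𝟙 A) (f ≫ g) _ _ hid hfg
  have := S.cellIso e
  have := S.cellIso η
  exact ⟨g, ⟨(asIso η).symm⟩, ⟨asIso e⟩⟩

end LocSCG

namespace IsRelExact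

variable {B : Type u} [Bicategory.{w, v} B] {S : LocSCG B} {A C : B} {f : A ⟶ C}

theorem is2Equiv_of_cCofaithful_of_cFullyFaithful (hS : IsRelExact S) (hco : CCofaithful f)
    (hff : CFullyFaithful f) : Is2Equiv f := by
  obtain ⟨K, k, ε₀, hker⟩ := hS.hasKer f
  obtain ⟨θ, hθ⟩ := hff.2 k (S.zro K A) (ε₀ ≫ (S.flat f).inv)
  exact S.is2Equiv_of_isCokernel ((hS.cofaithful_iff f K k ε₀ hker).mp hco) θ
    ((Iso.comp_inv_eq _).1 hθ.symm).symm

theorem is2Equiv_of_cFaithful_of_cFullyCofaithful (hS : IsRelExact S) (hfa : CFaithful f)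
    (hfc : CFullyCofaithful f) : Is2Equiv f := by
  obtain ⟨Q, c, π, hcok⟩ := hS.hasCok f
  obtain ⟨θ, hθ⟩ := hfc.2 c (S.zro C Q) (π ≫ (S.sharp f).inv)
  exact S.is2Equiv_of_isKernel ((hS.faithful_iff f Q c π hcok).mp hfa) θ
    ((Iso.comp_inv_eq _).1 hθ.symm).symm

end IsRelExact

theorem stmt5_general {B : Type u} [Bicategory.{w, v} B]
    (S : LocSCG B) (hS : IsRelExact S)
    {A C : B} (f : A ⟶ C) :
    (Is2Equiv f ↔ (CCofaithful f ∧ CFullyFaithful f))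
      ∧ (Is2Equiv f ↔ (CFaithful f ∧ CFullyCofaithful f)) :=
  ⟨⟨fun h => ⟨h.cFullyCofaithful.1, h.cFullyFaithful⟩,
      fun ⟨hco, hff⟩ => hS.is2Equiv_of_cCofaithful_of_cFullyFaithful hco hff⟩,
    ⟨fun h => ⟨h.cFullyFaithful.1, h.cFullyCofaithful⟩,
      fun ⟨hfa, hfc⟩ => hS.is2Equiv_of_cFaithful_of_cFullyCofaithful hfa hfc⟩⟩

/-- a 1-cell is an equivalence iff it is cofaithful and fully faithful,
iff it is faithful and fully cofaithful. -/
theorem stmt5 {B : Type u} [Bicategory.{w, v} B] [Bicategory.Strict B]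
    (S : LocSCG B) (hS : IsRelExact S)
    {A C : B} (f : A ⟶ C) :
    (Is2Equiv f ↔ (CCofaithful f ∧ CFullyFaithful f))
      ∧ (Is2Equiv f ↔ (CFaithful f ∧ CFullyCofaithful f)) :=
  stmt5_general S hS f
end

section
/- A 1-cell f: A→B in S is faithful if and only if the relative kernel Ker(0_{0,A}, f_I^♭) = 0, i.e. if and only if the zero object, equipped with the zero 1-cell into 0 and the canonical 2-cell, is a relative kernel of the pair (0_{0,A}: 0→A, f_I^♭: 0_{0,A}∘f ⟹ 0_{0,B}). -/
/-!
Common framework: relatively exact 2-categories (after Nakaoka,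
"Cohomology theory in 2-categories").
-/

open CategoryTheory Bicategory

universe w v u

/-!
Candidates for the relative kernel `Ker(0_{0,A}, f_I^♭)` are 1-cells `x : X ⟶ 0` with a 2-cell
`e : x ∘ 0 ⟹ 0` whose whiskering `e ▷ f` is prescribed by the compatibility condition; since
2-cells into `0` are unique, the zero object is this relative kernel exactly when `e` itself is
determined, i.e. when every automorphism `a` of a zero 1-cell with `a ▷ f = 1` is trivial.
Faithfulness of `f` gives this at once. Conversely, an automorphism `δ` of `g : X ⟶ A` with
`δ ▷ f = 1` is transported to an automorphism of a zero 1-cell by pairing `g` with a ⊗-inverse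
into `A × A`. The tensor constraints of `Hom` are not assumed natural, so the transport only uses
that, for a fixed 2-cell `τ : u ⟹ u`, the 1-cells `w` with `τ ▷ w = 1` are closed under
isomorphism, postcomposition, tensor products and tensor cancellation; the last two follow by
pairing into products, where `τ ▷ m = 1` is detected componentwise.
-/

section Whiskering

variable {B : Type u} [Bicategory.{w, v} B] {X Y P A : B} {u : X ⟶ Y} (τ : u ⟶ u)

theorem whiskerRight_eq_id_of_iso {w w' : Y ⟶ A} (ι : w ≅ w') (h : τ ▷ w = 𝟙 _) :
    τ ▷ w' = 𝟙 _ := by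
  have hconj : τ ▷ w' = (u ◁ ι.inv) ≫ (τ ▷ w) ≫ (u ◁ ι.hom) := by
    rw [← whisker_exchange, ← whiskerLeft_comp_assoc, ι.inv_hom_id, whiskerLeft_id,
      Category.id_comp]
  rw [hconj, h, Category.id_comp, ← whiskerLeft_comp, ι.inv_hom_id, whiskerLeft_id]

theorem whiskerRight_comp_eq_id_iff (m : Y ⟶ P) (t : P ⟶ A) :
    τ ▷ (m ≫ t) = 𝟙 _ ↔ (τ ▷ m) ▷ t = 𝟙 _ := by
  rw [whiskerRight_comp]
  constructor <;> intro h
  · simpa using congrArg (fun θ => (α_ u m t).hom ≫ θ ≫ (α_ u m t).inv) h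
  · simp [h]

theorem whiskerRight_comp_eq_id {m : Y ⟶ P} (t : P ⟶ A) (h : τ ▷ m = 𝟙 _) :
    τ ▷ (m ≫ t) = 𝟙 _ :=
  (whiskerRight_comp_eq_id_iff τ m t).2 (by rw [h, id_whiskerRight])

theorem cFaithful_of_whiskerRight_eq_id {C : B} {f : A ⟶ C}
    (hiso : ∀ {X : B} {g g' : X ⟶ A} (θ : g ⟶ g'), IsIso θ)
    (h : ∀ (X : B) (g : X ⟶ A) (δ : g ⟶ g), δ ▷ f = 𝟙 _ → δ = 𝟙 g) : CFaithful f := by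
  intro X g g' η θ hηθ
  have := hiso θ
  have hδ := h X g (η ≫ inv θ) (by rw [comp_whiskerRight, hηθ, ← comp_whiskerRight,
    IsIso.hom_inv_id, id_whiskerRight])
  simpa using congrArg (· ≫ θ) hδ

end Whiskering

namespace IsProduct2

variable {B : Type u} [Bicategory.{w, v} B] {A₁ A₂ P : B} {p₁ : P ⟶ A₁} {p₂ : P ⟶ A₂}

theorem eq_id_of_whiskerRight (hP : IsProduct2 A₁ A₂ P p₁ p₂) {X : B} {r : X ⟶ P} (τ : r ⟶ r)
    (h₁ : τ ▷ p₁ = 𝟙 _) (h₂ : τ ▷ p₂ = 𝟙 _) : τ = 𝟙 r := by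
  obtain ⟨η, -, hη⟩ := hP.2 X _ _ r r (𝟙 (r ≫ p₁)) (𝟙 (r ≫ p₂)) (𝟙 _) (𝟙 _)
  rw [hη τ ⟨by simp [h₁], by simp [h₂]⟩, hη (𝟙 r) ⟨by simp, by simp⟩]

theorem whiskerRight_eq_id (hP : IsProduct2 A₁ A₂ P p₁ p₂) {X Y : B} {u : X ⟶ Y} (τ : u ⟶ u)
    {m : Y ⟶ P} (h₁ : τ ▷ (m ≫ p₁) = 𝟙 _) (h₂ : τ ▷ (m ≫ p₂) = 𝟙 _) : τ ▷ m = 𝟙 _ :=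
  hP.eq_id_of_whiskerRight _ ((whiskerRight_comp_eq_id_iff τ m p₁).1 h₁)
    ((whiskerRight_comp_eq_id_iff τ m p₂).1 h₂)

end IsProduct2

namespace LocSCG

variable {B : Type u} [Bicategory.{w, v} B] (S : LocSCG B)

noncomputable def cellAsIso {A C : B} {f g : A ⟶ C} (η : f ⟶ g) : f ≅ g :=
  @asIso _ _ _ _ η (S.cellIso η)

def tensIso {A C : B} {f₁ g₁ f₂ g₂ : A ⟶ C} (e₁ : f₁ ≅ g₁) (e₂ : f₂ ≅ g₂) :
    S.tens f₁ f₂ ≅ S.tens g₁ g₂ :=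
  @MonoidalCategory.tensorIso _ _ (S.monStr A C) _ _ _ _ e₁ e₂

section Tensor

variable {X Y A : B} {u : X ⟶ Y} (τ : u ⟶ u)

theorem whiskerRight_tens_eq_id {w₁ w₂ : Y ⟶ A} (h₁ : τ ▷ w₁ = 𝟙 _) (h₂ : τ ▷ w₂ = 𝟙 _) :
    τ ▷ S.tens w₁ w₂ = 𝟙 _ := by
  obtain ⟨P, q₁, q₂, hP⟩ := S.hasProd A A
  obtain ⟨m, ξ₁, ξ₂, -⟩ := hP.1 Y w₁ w₂
  have hm : τ ▷ m = 𝟙 _ := hP.whiskerRight_eq_id τ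
    (whiskerRight_eq_id_of_iso τ (S.cellAsIso ξ₁).symm h₁)
    (whiskerRight_eq_id_of_iso τ (S.cellAsIso ξ₂).symm h₂)
  exact whiskerRight_eq_id_of_iso τ
    (S.sharpTensor m q₁ q₂ ≪≫ S.tensIso (S.cellAsIso ξ₁) (S.cellAsIso ξ₂))
    (whiskerRight_comp_eq_id τ _ hm)

theorem whiskerRight_eq_id_of_tens {w₁ w₂ : Y ⟶ A} (h : τ ▷ S.tens w₁ w₂ = 𝟙 _)
    (h₂ : τ ▷ w₂ = 𝟙 _) : τ ▷ w₁ = 𝟙 _ := by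
  obtain ⟨P, q₁, q₂, hP⟩ := S.hasProd A A
  obtain ⟨q₂', ⟨β⟩⟩ := S.objInv q₂
  obtain ⟨m, σ₁, σ₂, -⟩ := hP.1 Y (S.tens w₁ w₂) w₂
  have hm : τ ▷ m = 𝟙 _ := hP.whiskerRight_eq_id τ
    (whiskerRight_eq_id_of_iso τ (S.cellAsIso σ₁).symm h)
    (whiskerRight_eq_id_of_iso τ (S.cellAsIso σ₂).symm h₂)
  -- `m ≫ q₂'` is a ⊗-inverse of `w₂ ≅ m ≫ q₂`, so `m ≫ (q₁ ⊗ q₂')` recovers `w₁`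
  let κ : S.tens w₂ (m ≫ q₂') ≅ S.zro Y A :=
    S.tensIso (S.cellAsIso σ₂).symm (Iso.refl _) ≪≫ (S.sharpTensor m q₂ q₂').symm ≪≫
      whiskerLeftIso m β ≪≫ S.sharp m
  exact whiskerRight_eq_id_of_iso τ
    (S.sharpTensor m q₁ q₂' ≪≫ S.tensIso (S.cellAsIso σ₁) (Iso.refl _) ≪≫
      S.tassoc w₁ w₂ _ ≪≫ S.tensIso (Iso.refl w₁) κ ≪≫ S.trunit w₁)
    (whiskerRight_comp_eq_id τ _ hm)

end Tensor

section ZeroRelKernel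

variable {X A C : B}

theorem toZero_whiskerRight_flat (x : X ⟶ S.zObj) (h : S.zObj ⟶ C) :
    (S.toZero x ▷ h) ≫ (S.flat h).hom = (x ◁ S.fromZero h) ≫ (S.sharp x).hom := by
  rw [← S.flat_natural (S.fromZero h), ← S.sharp_natural (S.toZero x), ← whisker_exchange_assoc,
    S.flat_zero, S.sharp_zero]

noncomputable def toZeroComp (x : X ⟶ S.zObj) : x ≫ S.zro S.zObj A ⟶ S.zro X A :=
  (S.toZero x ▷ S.zro S.zObj A) ≫ (S.flat (S.zro S.zObj A)).hom

theorem toZeroComp_relKerCompat (f : A ⟶ C) (x : X ⟶ S.zObj) :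
    S.RelKerCompat (S.zro S.zObj A) f (S.flat f).hom x (S.toZeroComp x) := by
  have hflat : (S.flat (A := S.zObj) f).hom = S.fromZero (S.zro S.zObj A ≫ f) :=
    S.fromZero_unique _ _ _
  have hcomp := S.flat_comp (X := X) (S.zro S.zObj A) f
  rw [Iso.eq_inv_comp] at hcomp
  unfold RelKerCompat toZeroComp zro at *
  rw [comp_whiskerRight, Category.assoc, ← hcomp,
    associator_naturality_left_assoc, toZero_whiskerRight_flat, hflat]

theorem whiskerRight_toZeroComp {x x' : X ⟶ S.zObj} (e' : x' ≫ S.zro S.zObj S.zObj ⟶ x) :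
    (e' ▷ S.zro S.zObj A) ≫ S.toZeroComp x
      = (α_ x' (S.zro S.zObj S.zObj) (S.zro S.zObj A)).hom ≫
          (x' ◁ (S.flat (S.zro S.zObj A)).hom) ≫ (S.sharp x').hom := by
  unfold toZeroComp zro at *
  rw [← comp_whiskerRight_assoc, S.toZero_unique _ (e' ≫ S.toZero x) (S.sharp x').hom,
    S.sharp_flat]

theorem cell_to_zObj_ext {g h : X ⟶ S.zObj} (η θ : g ⟶ h) : η = θ :=
  (cancel_mono (S.cellAsIso (S.toZero h)).hom).1 (S.toZero_unique _ _ _)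

theorem isRelKernel_zero_of_cFaithful {f : A ⟶ C} (hf : CFaithful f) :
    S.IsRelKernel (S.zro S.zObj A) f (S.flat f).hom
      S.zObj (S.zro S.zObj S.zObj) (S.flat (S.zro S.zObj A)).hom := by
  refine ⟨S.fromZero_unique _ _ _,
    fun X x e he => ⟨x, (S.sharp x).hom ≫ (S.cellAsIso (S.toZero x)).inv, ?_⟩,
    fun X x e _ x₁ x₂ e₁ e₂ _ _ => ⟨S.toZero x₁ ≫ (S.cellAsIso (S.toZero x₂)).inv,
      S.cell_to_zObj_ext _ _, fun _ _ => S.cell_to_zObj_ext _ _⟩⟩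
  have he' : e = S.toZeroComp x := hf _ _ ((cancel_mono (S.flat f).hom).1
    (he.symm.trans (S.toZeroComp_relKerCompat f x)))
  rw [he']
  exact S.whiskerRight_toZeroComp _

theorem eq_id_of_isRelKernel_zero {f : A ⟶ C}
    (hR : S.IsRelKernel (S.zro S.zObj A) f (S.flat f).hom
      S.zObj (S.zro S.zObj S.zObj) (S.flat (S.zro S.zObj A)).hom)
    (a : S.zro X A ⟶ S.zro X A) (ha : a ▷ f = 𝟙 _) : a = 𝟙 _ := by
  have hcompat : S.RelKerCompat (S.zro S.zObj A) f (S.flat f).hom (S.zro X S.zObj)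
      (S.toZeroComp _ ≫ a) := by
    have h := S.toZeroComp_relKerCompat (X := X) f (S.zro X S.zObj)
    unfold RelKerCompat at h ⊢
    rwa [comp_whiskerRight, ha, Category.comp_id]
  obtain ⟨x', e', he'⟩ := hR.2.1 X _ _ hcompat
  have := S.cellIso ((e' ▷ S.zro S.zObj A) ≫ S.toZeroComp (S.zro X S.zObj))
  refine (cancel_epi ((e' ▷ S.zro S.zObj A) ≫ S.toZeroComp (S.zro X S.zObj))).1 ?_
  simpa using he'.trans (S.whiskerRight_toZeroComp e').symm

theorem whiskerRight_eq_id_of_isRelKernel_zero {f : A ⟶ C}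
    (hR : S.IsRelKernel (S.zro S.zObj A) f (S.flat f).hom
      S.zObj (S.zro S.zObj S.zObj) (S.flat (S.zro S.zObj A)).hom)
    {P : B} {u : X ⟶ P} (τ : u ⟶ u) {m : P ⟶ A} (ω : u ≫ m ≅ S.zro X A)
    (h : τ ▷ (m ≫ f) = 𝟙 _) : τ ▷ m = 𝟙 _ := by
  have ha := S.eq_id_of_isRelKernel_zero hR (ω.inv ≫ (τ ▷ m) ≫ ω.hom) (by
    rw [comp_whiskerRight, comp_whiskerRight, (whiskerRight_comp_eq_id_iff τ m f).1 h,
      Category.id_comp, ← comp_whiskerRight, ω.inv_hom_id, id_whiskerRight])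
  simpa using congrArg (fun θ => ω.hom ≫ θ ≫ ω.inv) ha

theorem cFaithful_of_isRelKernel_zero {f : A ⟶ C}
    (hR : S.IsRelKernel (S.zro S.zObj A) f (S.flat f).hom
      S.zObj (S.zro S.zObj S.zObj) (S.flat (S.zro S.zObj A)).hom) :
    CFaithful f := by
  refine cFaithful_of_whiskerRight_eq_id S.cellIso fun X g δ hδ => ?_
  obtain ⟨P, p₁, p₂, hP⟩ := S.hasProd A A
  obtain ⟨g', ⟨β⟩⟩ := S.objInv g
  obtain ⟨u, ξ₁, ξ₂, -⟩ := hP.1 X g g'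
  -- `τ : u ⟶ u` acts as `δ` on the first factor and trivially on the second, while
  -- `u ≫ (p₁ ⊗ p₂) ≅ g ⊗ g'` is a zero 1-cell
  obtain ⟨τ, ⟨hτ₁, hτ₂⟩, -⟩ := hP.2 X g g' u u (ξ₁ ≫ δ) ξ₂ ξ₁ ξ₂
  have := S.cellIso ξ₁
  have hp₂ : τ ▷ p₂ = 𝟙 _ := by
    have := S.cellIso ξ₂
    exact (cancel_mono ξ₂).1 (by rw [hτ₂, Category.id_comp])
  have hp₁f : τ ▷ (p₁ ≫ f) = 𝟙 _ := by
    have hp₁ : τ ▷ p₁ = ξ₁ ≫ δ ≫ inv ξ₁ := by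
      rw [← reassoc_of% hτ₁, IsIso.hom_inv_id, Category.comp_id]
    rw [whiskerRight_comp_eq_id_iff, hp₁, comp_whiskerRight, comp_whiskerRight, hδ,
      Category.id_comp, ← comp_whiskerRight, IsIso.hom_inv_id, id_whiskerRight]
  have hpf : τ ▷ (S.tens p₁ p₂ ≫ f) = 𝟙 _ :=
    whiskerRight_eq_id_of_iso τ (S.flatTensor f p₁ p₂).symm
      (S.whiskerRight_tens_eq_id τ hp₁f (whiskerRight_comp_eq_id τ f hp₂))
  have hp : τ ▷ S.tens p₁ p₂ = 𝟙 _ := S.whiskerRight_eq_id_of_isRelKernel_zero hR τ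
    (S.sharpTensor u p₁ p₂ ≪≫ S.tensIso (S.cellAsIso ξ₁) (S.cellAsIso ξ₂) ≪≫ β) hpf
  have hp₁ : τ ▷ p₁ = 𝟙 _ := S.whiskerRight_eq_id_of_tens τ hp hp₂
  exact (cancel_epi ξ₁).1 (by rw [← hτ₁, hp₁, Category.id_comp, Category.comp_id])

end ZeroRelKernel

end LocSCG

theorem stmt8_general {B : Type u} [Bicategory.{w, v} B]
    (S : LocSCG B)
    {A C : B} (f : A ⟶ C) :
    CFaithful f ↔ S.IsRelKernel (S.zro S.zObj A) f (S.flat f).hom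
        S.zObj (S.zro S.zObj S.zObj) (S.flat (S.zro S.zObj A)).hom :=
  ⟨S.isRelKernel_zero_of_cFaithful, S.cFaithful_of_isRelKernel_zero⟩

/-- `f` is faithful iff the relative kernel `Ker(0_{0,A}, f_I^♭)` is zero. -/
theorem stmt8 {B : Type u} [Bicategory.{w, v} B] [Bicategory.Strict B]
    (S : LocSCG B) (hS : IsRelExact S)
    {A C : B} (f : A ⟶ C) :
    CFaithful f ↔ S.IsRelKernel (S.zro S.zObj A) f (S.flat f).hom
        S.zObj (S.zro S.zObj S.zObj) (S.flat (S.zro S.zObj A)).hom :=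
  stmt8_general S f
end

section
/- Let f: A→B, g: B→C be 1-cells and φ: f∘g ⟹ 0 a 2-cell in S. Let (Ker(g), ℓ, ε) be a kernel of g and let (f̲: A→Ker(g), φ̲: f̲∘ℓ ⟹ f) be the factorization of f through ℓ with (f̲∘ε)·f̲_I^♯ = (φ̲∘g)·φ. Then (Ker(f̲), k(f̲), η) is a relative kernel Ker(f,φ), where η := (k(f̲)∘φ̲^{−1})·(ε_{f̲}∘ℓ)·ℓ_I^♭: k(f̲)∘f ⟹ 0. In particular, relative kernels always exist in S. -/
/-!
Common framework: relatively exact 2-categories (after Nakaoka,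
"Cohomology theory in 2-categories").
-/

open CategoryTheory Bicategory

universe w v u

/-!
For a kernel `(Kg, l, ε₀)` of `g` and any `y : X ⟶ Kg`, each `θ : y ⟹ 0` makes
`(y, (θ ▷ l) · l_I^♭)` a factorization of `(0, g_I^♭)` through `l`. The 2-universality of the
kernel therefore makes `θ ↦ (θ ▷ l) · l_I^♭` a bijection from 2-cells `y ⟹ 0` onto the
2-cells `y ∘ l ⟹ 0` compatible with `ε₀`. A pair `(x, e)` compatible with `φ` yields the
compatible 2-cell `(x ◁ φ̲) · e` on `x ∘ f̲ ∘ l`, hence a unique `e₀ : x ∘ f̲ ⟹ 0`. Transporting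
the factorization conditions along the bijection shows that factorizations of `(x, e)` through
`(k, η)` are exactly the factorizations of `(x, e₀)` through the kernel `(k, ε')` of `f̲`.
Existence of relative kernels follows by taking two kernels.
-/

namespace LocSCG

-- Lets the unit constraints `sharp`, `flat`, stated with `munit`, rewrite terms written with `zro`.
attribute [reducible] zro

variable {B : Type u} [Bicategory.{w, v} B] (S : LocSCG B)

/-- The condition `(e' ▷ f) · e = (x' ◁ ε₀) · x'_I^♯` on a factorization `(x', e')` of `(x, e)`
through `(k, ε₀)` in the universal property of a kernel. -/
def KerLiftCompat {X K A C : B} (f : A ⟶ C) (k : K ⟶ A) (ε₀ : k ≫ f ⟶ S.zro K C)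
    {x : X ⟶ A} (e : x ≫ f ⟶ S.zro X C) {x' : X ⟶ K} (e' : x' ≫ k ⟶ x) : Prop :=
  (e' ▷ f) ≫ e = (α_ x' k f).hom ≫ (x' ◁ ε₀) ≫ (S.sharp x').hom

def whiskerRightZero {X K C : B} {y : X ⟶ K} (θ : y ⟶ S.zro X K) (l : K ⟶ C) :
    y ≫ l ⟶ S.zro X C :=
  (θ ▷ l) ≫ (S.flat l).hom

section Kernel

variable {C E K X : B} {g : C ⟶ E} {l : K ⟶ C} {ε₀ : l ≫ g ⟶ S.zro K E}

theorem kerLiftCompat_whiskerRightZero {y : X ⟶ K} (θ : y ⟶ S.zro X K) :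
    S.KerLiftCompat g l ε₀ (S.flat g).hom (S.whiskerRightZero θ l) := by
  have hfz : (S.flat (A := X) (S.zro K E)).hom = (S.sharp (E := E) (S.zro X K)).hom :=
    (S.flat_zero X K E).trans (S.sharp_zero X K E).symm
  calc (S.whiskerRightZero θ l ▷ g) ≫ (S.flat g).hom
      = (θ ▷ l ▷ g) ≫ (α_ (S.zro X K) l g).hom ≫ (S.flat (l ≫ g)).hom := by
        simp [whiskerRightZero, S.flat_comp]
    _ = (α_ y l g).hom ≫ (θ ▷ (l ≫ g)) ≫ (S.zro X K ◁ ε₀) ≫ (S.flat (S.zro K E)).hom := by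
        rw [associator_naturality_left_assoc, S.flat_natural ε₀]
    _ = (α_ y l g).hom ≫ (y ◁ ε₀) ≫ (S.sharp y).hom := by
        rw [← whisker_exchange_assoc, hfz, S.sharp_natural θ]

theorem kerLiftCompat_flat :
    S.KerLiftCompat g l ε₀ (S.flat (A := X) g).hom (S.flat l).hom := by
  simpa only [whiskerRightZero, id_whiskerRight, Category.id_comp] using
    S.kerLiftCompat_whiskerRightZero (ε₀ := ε₀) (𝟙 (S.zro X K))

theorem IsKernel.whiskerRightZero_injective (hK : S.IsKernel g K l ε₀) {y : X ⟶ K} :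
    Function.Injective (fun θ : y ⟶ S.zro X K => S.whiskerRightZero θ l) := by
  intro θ θ' h
  obtain ⟨u, -, huniq⟩ := hK.2 X (S.zro X C) (S.flat g).hom y (S.zro X K)
      (S.whiskerRightZero θ l) (S.flat l).hom (S.kerLiftCompat_whiskerRightZero θ)
      S.kerLiftCompat_flat
  exact (huniq θ rfl).trans (huniq θ' h.symm).symm

theorem IsKernel.exists_whiskerRightZero_eq (hK : S.IsKernel g K l ε₀) {y : X ⟶ K}
    {ψ : y ≫ l ⟶ S.zro X C} (hψ : S.KerLiftCompat g l ε₀ (S.flat g).hom ψ) :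
    ∃ θ : y ⟶ S.zro X K, S.whiskerRightZero θ l = ψ := by
  obtain ⟨θ, hθ, -⟩ := hK.2 X (S.zro X C) (S.flat g).hom y (S.zro X K) ψ (S.flat l).hom hψ
    S.kerLiftCompat_flat
  exact ⟨θ, hθ⟩

end Kernel

section Factorization

variable {A C E Kg X : B} {f : A ⟶ C} {g : C ⟶ E} {φ : f ≫ g ⟶ S.zro A E}
  {l : Kg ⟶ C} {ε₀ : l ≫ g ⟶ S.zro Kg E} {fb : A ⟶ Kg} {φb : fb ≫ l ⟶ f}

theorem kerLiftCompat_of_relKerCompat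
    (hfb : (φb ▷ g) ≫ φ = (α_ fb l g).hom ≫ (fb ◁ ε₀) ≫ (S.sharp fb).hom)
    {x : X ⟶ A} {e : x ≫ f ⟶ S.zro X C} (hc : S.RelKerCompat f g φ x e) :
    S.KerLiftCompat g l ε₀ (S.flat g).hom ((α_ x fb l).hom ≫ (x ◁ φb) ≫ e) := by
  unfold KerLiftCompat
  calc (((α_ x fb l).hom ≫ (x ◁ φb) ≫ e) ▷ g) ≫ (S.flat g).hom
      = ((α_ x fb l).hom ▷ g) ≫ ((x ◁ φb) ▷ g) ≫ (α_ x f g).hom ≫ (x ◁ φ) ≫ (S.sharp x).hom := by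
        rw [hc]; simp
    _ = ((α_ x fb l).hom ▷ g) ≫ (α_ x (fb ≫ l) g).hom ≫ (x ◁ ((φb ▷ g) ≫ φ)) ≫ (S.sharp x).hom := by
        bicategory
    _ = (α_ (x ≫ fb) l g).hom ≫ ((x ≫ fb) ◁ ε₀) ≫ (S.sharp (x ≫ fb)).hom := by
        rw [hfb, S.sharp_comp]; bicategory

variable {K : B} {k : K ⟶ A} {ε' : k ≫ fb ⟶ S.zro K Kg}

noncomputable def relKerCell (φb : fb ≫ l ⟶ f) (k : K ⟶ A) (ε' : k ≫ fb ⟶ S.zro K Kg) :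
    k ≫ f ⟶ S.zro K C :=
  (k ◁ S.inv2 φb) ≫ (α_ k fb l).inv ≫ S.whiskerRightZero ε' l

theorem relKerCompat_relKerCell
    (hfb : (φb ▷ g) ≫ φ = (α_ fb l g).hom ≫ (fb ◁ ε₀) ≫ (S.sharp fb).hom) :
    S.RelKerCompat f g φ k (S.relKerCell φb k ε') := by
  have := S.cellIso φb
  have hfb' : (fb ◁ ε₀) ≫ (S.sharp fb).hom = (α_ fb l g).inv ≫ (φb ▷ g) ≫ φ := by
    simp [hfb]
  refine Eq.symm ?_
  calc (S.relKerCell φb k ε' ▷ g) ≫ (S.flat g).hom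
      = ((k ◁ S.inv2 φb) ▷ g) ≫ ((α_ k fb l).inv ▷ g) ≫ (α_ (k ≫ fb) l g).hom
          ≫ ((k ≫ fb) ◁ ε₀) ≫ (S.sharp (k ≫ fb)).hom := by
        rw [← S.kerLiftCompat_whiskerRightZero ε']; simp [relKerCell]
    _ = (α_ k f g).hom ≫ (k ◁ ((S.inv2 φb ▷ g) ≫ (α_ fb l g).hom ≫ (fb ◁ ε₀) ≫ (S.sharp fb).hom))
          ≫ (S.sharp k).hom := by
        rw [S.sharp_comp]; bicategory
    _ = (α_ k f g).hom ≫ (k ◁ φ) ≫ (S.sharp k).hom := by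
        rw [hfb']; simp [inv2]

theorem whiskerRightZero_whiskerRight_comp {x : X ⟶ A} {e : x ≫ f ⟶ S.zro X C}
    {e₀ : x ≫ fb ⟶ S.zro X Kg} (he₀ : S.whiskerRightZero e₀ l = (α_ x fb l).hom ≫ (x ◁ φb) ≫ e)
    {x' : X ⟶ K} (e' : x' ≫ k ⟶ x) :
    S.whiskerRightZero ((e' ▷ fb) ≫ e₀) l
      = (α_ (x' ≫ k) fb l).hom ≫ ((x' ≫ k) ◁ φb) ≫ (e' ▷ f) ≫ e := by
  calc S.whiskerRightZero ((e' ▷ fb) ≫ e₀) l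
      = (e' ▷ fb ▷ l) ≫ S.whiskerRightZero e₀ l := by simp [whiskerRightZero]
    _ = (α_ (x' ≫ k) fb l).hom ≫ ((x' ≫ k) ◁ φb) ≫ (e' ▷ f) ≫ e := by
        rw [he₀, associator_naturality_left_assoc, ← whisker_exchange_assoc]

theorem whiskerRightZero_kerLiftCell (x' : X ⟶ K) :
    S.whiskerRightZero ((α_ x' k fb).hom ≫ (x' ◁ ε') ≫ (S.sharp x').hom) l
      = (α_ (x' ≫ k) fb l).hom ≫ ((x' ≫ k) ◁ φb) ≫ (α_ x' k f).hom
          ≫ (x' ◁ S.relKerCell φb k ε') ≫ (S.sharp x').hom := by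
  have := S.cellIso φb
  calc S.whiskerRightZero ((α_ x' k fb).hom ≫ (x' ◁ ε') ≫ (S.sharp x').hom) l
      = (α_ (x' ≫ k) fb l).hom ≫ (α_ x' k (fb ≫ l)).hom
          ≫ (x' ◁ ((α_ k fb l).inv ≫ S.whiskerRightZero ε' l)) ≫ (S.sharp x').hom := by
        simp only [whiskerRightZero, comp_whiskerRight, Category.assoc, S.sharp_flat]
        bicategory
    _ = (α_ (x' ≫ k) fb l).hom ≫ (α_ x' k (fb ≫ l)).hom ≫ (x' ◁ k ◁ (φb ≫ S.inv2 φb))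
          ≫ (x' ◁ ((α_ k fb l).inv ≫ S.whiskerRightZero ε' l)) ≫ (S.sharp x').hom := by
        simp [inv2]
    _ = (α_ (x' ≫ k) fb l).hom ≫ ((x' ≫ k) ◁ φb) ≫ (α_ x' k f).hom
          ≫ (x' ◁ S.relKerCell φb k ε') ≫ (S.sharp x').hom := by
        simp only [relKerCell]
        bicategory

theorem kerLiftCompat_iff_relKerCell (hKg : S.IsKernel g Kg l ε₀)
    {x : X ⟶ A} {e : x ≫ f ⟶ S.zro X C} {e₀ : x ≫ fb ⟶ S.zro X Kg}
    (he₀ : S.whiskerRightZero e₀ l = (α_ x fb l).hom ≫ (x ◁ φb) ≫ e)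
    {x' : X ⟶ K} (e' : x' ≫ k ⟶ x) :
    S.KerLiftCompat fb k ε' e₀ e' ↔ S.KerLiftCompat f k (S.relKerCell φb k ε') e e' := by
  have := S.cellIso φb
  refine (hKg.whiskerRightZero_injective S).eq_iff.symm.trans ?_
  rw [S.whiskerRightZero_whiskerRight_comp he₀, S.whiskerRightZero_kerLiftCell, cancel_epi,
    cancel_epi]
  rfl

theorem IsKernel.isRelKernel_relKerCell (hKg : S.IsKernel g Kg l ε₀)
    (hfb : (φb ▷ g) ≫ φ = (α_ fb l g).hom ≫ (fb ◁ ε₀) ≫ (S.sharp fb).hom)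
    (hK : S.IsKernel fb K k ε') :
    S.IsRelKernel f g φ K k (S.relKerCell φb k ε') := by
  refine ⟨S.relKerCompat_relKerCell hfb, ?_, ?_⟩
  · intro X x e hc
    obtain ⟨e₀, he₀⟩ := hKg.exists_whiskerRightZero_eq S (S.kerLiftCompat_of_relKerCompat hfb hc)
    obtain ⟨x', e', hx'⟩ := hK.1 X x e₀
    exact ⟨x', e', (S.kerLiftCompat_iff_relKerCell hKg he₀ e').1 hx'⟩
  · intro X x e hc x₁ x₂ e₁ e₂ h₁ h₂
    obtain ⟨e₀, he₀⟩ := hKg.exists_whiskerRightZero_eq S (S.kerLiftCompat_of_relKerCompat hfb hc)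
    exact hK.2 X x e₀ x₁ x₂ e₁ e₂ ((S.kerLiftCompat_iff_relKerCell hKg he₀ e₁).2 h₁)
      ((S.kerLiftCompat_iff_relKerCell hKg he₀ e₂).2 h₂)

end Factorization

end LocSCG

theorem stmt13_general {B : Type u} [Bicategory.{w, v} B]
    (S : LocSCG B) (hS : IsRelExact S)
    {A C E : B} (f : A ⟶ C) (g : C ⟶ E) (φ : f ≫ g ⟶ S.zro A E)
    (Kg : B) (l : Kg ⟶ C) (ε₀ : l ≫ g ⟶ S.zro Kg E) (hKg : S.IsKernel g Kg l ε₀)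
    (fb : A ⟶ Kg) (φb : fb ≫ l ⟶ f)
    (hfb : (φb ▷ g) ≫ φ = (α_ fb l g).hom ≫ (fb ◁ ε₀) ≫ (S.sharp fb).hom)
    (K : B) (k : K ⟶ A) (ε' : k ≫ fb ⟶ S.zro K Kg) (hK : S.IsKernel fb K k ε') :
    S.IsRelKernel f g φ K k
        ((k ◁ S.inv2 φb) ≫ (α_ k fb l).inv ≫ (ε' ▷ l) ≫ (S.flat l).hom)
      ∧ ∀ {A' C' E' : B} (f' : A' ⟶ C') (g' : C' ⟶ E') (φ' : f' ≫ g' ⟶ S.zro A' E'),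
          ∃ (K' : B) (k' : K' ⟶ A') (ε'' : k' ≫ f' ⟶ S.zro K' C'),
            S.IsRelKernel f' g' φ' K' k' ε'' := by
  refine ⟨hKg.isRelKernel_relKerCell S hfb hK, fun f' g' φ' => ?_⟩
  obtain ⟨Kg', l', ε₁, hKg'⟩ := hS.hasKer g'
  obtain ⟨fb', φb', hfb'⟩ := hKg'.1 _ f' φ'
  obtain ⟨K', k', ε₂, hK'⟩ := hS.hasKer fb'
  exact ⟨K', k', _, hKg'.isRelKernel_relKerCell S hfb' hK'⟩

/-- the relative kernel `Ker(f, φ)` is computed as the kernel of the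
induced 1-cell `f̲ : A ⟶ Ker g`; in particular relative kernels always exist. -/
theorem stmt13 {B : Type u} [Bicategory.{w, v} B] [Bicategory.Strict B]
    (S : LocSCG B) (hS : IsRelExact S)
    {A C E : B} (f : A ⟶ C) (g : C ⟶ E) (φ : f ≫ g ⟶ S.zro A E)
    (Kg : B) (l : Kg ⟶ C) (ε₀ : l ≫ g ⟶ S.zro Kg E) (hKg : S.IsKernel g Kg l ε₀)
    (fb : A ⟶ Kg) (φb : fb ≫ l ⟶ f)
    (hfb : (φb ▷ g) ≫ φ = (α_ fb l g).hom ≫ (fb ◁ ε₀) ≫ (S.sharp fb).hom)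
    (K : B) (k : K ⟶ A) (ε' : k ≫ fb ⟶ S.zro K Kg) (hK : S.IsKernel fb K k ε') :
    S.IsRelKernel f g φ K k
        ((k ◁ S.inv2 φb) ≫ (α_ k fb l).inv ≫ (ε' ▷ l) ≫ (S.flat l).hom)
      ∧ ∀ {A' C' E' : B} (f' : A' ⟶ C') (g' : C' ⟶ E') (φ' : f' ≫ g' ⟶ S.zro A' E'),
          ∃ (K' : B) (k' : K' ⟶ A') (ε'' : k' ≫ f' ⟶ S.zro K' C'),
            S.IsRelKernel f' g' φ' K' k' ε'' :=
  stmt13_general S hS f g φ Kg l ε₀ hKg fb φb hfb K k ε' hK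
end
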